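/- Let X be a complex Banach space and L(X) the Banach algebra of bounded linear operators on X. Suppose A, D and BC have strongly Drazin inverses. If ABC = 0, BC A^π = 0, BDC = 0 and BD² = 0, where A^π = I − A·A^D and A^D is the Drazin inverse of A, then the operator matrix [[A, B], [C, D]] has a Hirano inverse in M₂(L(X)). -/

import Mathlib

/-!
An element `x` of a ring with `x - x ^ 2` nilpotent is, in the commutative ring `ℤ[x]`, congruent
to an idempotent modulo a nilpotent (Newton's method for `X - X ^ 2`); this yields a strongly Drazin
inverse of `x`, and for `x = a ^ 2` a Hirano inverse of `a` commuting with `a`. So it suffices to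
show that `M ^ 2 - M ^ 4` is nilpotent for `M = !![A, B; C, D]`.

The key rule: if `x * y = 0` and `x - x ^ 2`, `y - y ^ 2` are nilpotent, then so is
`(x + y) - (x + y) ^ 2`. The hypotheses give `(B * C) ^ 2 = 0`, and
`M ^ 2 = !![A ^ 2 + B * C, A * B + B * D; 0, 0] + !![0, 0; C * A + D * C, C * B + D ^ 2]`
with the first summand annihilating the second. Applying the rule to `A ^ 2` and `B * C`, to
`C * B` and `D ^ 2`, and then to the two summands of `M ^ 2` concludes.
-/

/-- `a` has a Hirano inverse: there exists `z` with `az = za`, `z = zaz`,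
and `a^2 - az` nilpotent. -/
def HasHiranoInverse {R : Type*} [Ring R] (a : R) : Prop :=
  ∃ z : R, a * z = z * a ∧ z = z * a * z ∧ IsNilpotent (a ^ 2 - a * z)

/-- `a` has a strongly Drazin inverse: there exists `z` with `az = za`, `z = zaz`,
and `a - az` nilpotent. -/
def HasStronglyDrazinInverse {R : Type*} [Ring R] (a : R) : Prop :=
  ∃ z : R, a * z = z * a ∧ z = z * a * z ∧ IsNilpotent (a - a * z)

section Ring
variable {R : Type*} [Ring R]

theorem isNilpotent_add_of_mul_eq_zero {u v : R} (h : u * v = 0) (hu : IsNilpotent u)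
    (hv : IsNilpotent v) : IsNilpotent (u + v) := by
  obtain ⟨p, hp⟩ := hu
  obtain ⟨q, hq⟩ := hv
  have hv_absorb : ∀ k, (u + v) ^ k * v = v ^ (k + 1) := by
    intro k
    induction k with
    | zero => simp
    | succ k ih => rw [pow_succ, mul_assoc, add_mul, h, zero_add, ← mul_assoc, ih, ← pow_succ]
  have hu_tail : ∀ j, (u + v) ^ (q + j) = (u + v) ^ q * u ^ j := by
    intro j
    induction j with
    | zero => simp
    | succ j ih =>
      rw [← add_assoc, pow_succ, mul_add, hv_absorb, pow_eq_zero_of_le (by omega) hq, add_zero,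
        ih, mul_assoc, ← pow_succ]
  exact ⟨q + p, by rw [hu_tail, hp, mul_zero]⟩

theorem HasStronglyDrazinInverse.isNilpotent_sub_sq {a : R} (h : HasStronglyDrazinInverse a) :
    IsNilpotent (a - a ^ 2) := by
  obtain ⟨z, hc, hz, hnil⟩ := h
  have hp : a * z * (a * z) = a * z := by rw [mul_assoc, ← mul_assoc z a z, ← hz]
  have hcp : Commute a (a * z) := (Commute.refl a).mul_right hc
  have hfactor : a - a ^ 2 = (a - a * z) * (1 - a - a * z) := by
    calc a - a ^ 2 = (a - a * z) * (1 - a - a * z) - (a * z * (a * z) - a * z)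
          + (a * (a * z) - a * z * a) := by noncomm_ring
      _ = (a - a * z) * (1 - a - a * z) := by rw [hp, hcp.eq]; simp
  rw [hfactor]
  exact (((Commute.one_right _).sub_right ((Commute.refl a).sub_left hcp.symm)).sub_right
    (hcp.sub_left (Commute.refl _))).isNilpotent_mul_right hnil

theorem isNilpotent_sub_sq_of_isNilpotent {x : R} (h : IsNilpotent x) :
    IsNilpotent (x - x ^ 2) := by
  rw [show x - x ^ 2 = x * (1 - x) by noncomm_ring]
  exact ((Commute.one_right x).sub_right (Commute.refl x)).isNilpotent_mul_right h

theorem isNilpotent_sq_sub_sq_sq {x : R} (h : IsNilpotent (x - x ^ 2)) :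
    IsNilpotent (x ^ 2 - (x ^ 2) ^ 2) := by
  rw [show x ^ 2 - (x ^ 2) ^ 2 = (x - x ^ 2) * (x + x ^ 2) by noncomm_ring]
  have hc : Commute x (x ^ 2) := (Commute.refl x).pow_right 2
  exact (((Commute.refl x).sub_left hc.symm).add_right
    (hc.sub_left (Commute.refl _))).isNilpotent_mul_right h

theorem isNilpotent_add_sub_sq_of_mul_eq_zero {x y : R} (h : x * y = 0)
    (hx : IsNilpotent (x - x ^ 2)) (hy : IsNilpotent (y - y ^ 2)) :
    IsNilpotent (x + y - (x + y) ^ 2) := by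
  have hdecomp : x + y - (x + y) ^ 2 = (x - x ^ 2 + -(y * x)) + (y - y ^ 2) - x * y := by
    noncomm_ring
  rw [hdecomp, h, sub_zero]
  refine isNilpotent_add_of_mul_eq_zero ?_ (isNilpotent_add_of_mul_eq_zero ?_ hx ?_) hy
  · calc (x - x ^ 2 + -(y * x)) * (y - y ^ 2)
          = (1 - x - y) * (x * y) * (1 - y) := by noncomm_ring
      _ = 0 := by simp [h]
  · calc (x - x ^ 2) * -(y * x) = -((1 - x) * (x * y) * x) := by noncomm_ring
      _ = 0 := by simp [h]
  · refine ⟨2, ?_⟩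
    calc (-(y * x)) ^ 2 = y * (x * y) * x := by noncomm_ring
      _ = 0 := by simp [h]

end Ring

section CommRing
open Polynomial
variable {S : Type*} [CommRing S]

theorem exists_isIdempotentElem_isNilpotent_sub {b : S} (h : IsNilpotent (b - b ^ 2)) :
    ∃ e, IsIdempotentElem e ∧ IsNilpotent (b - e) := by
  have hunit : IsUnit (1 - 2 * b) := by
    have hsq : IsUnit ((1 - 2 * b) ^ 2) := by
      rw [show (1 - 2 * b) ^ 2 = 1 + -4 * (b - b ^ 2) by ring]
      exact ((Commute.all _ _).isNilpotent_mul_left h).isUnit_one_add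
    exact (isUnit_pow_iff two_ne_zero).mp hsq
  obtain ⟨e, ⟨hbe, he⟩, -⟩ :=
    existsUnique_nilpotent_sub_and_aeval_eq_zero (x := b) (P := (X - X ^ 2 : ℤ[X]))
      (by simpa using h) (by simpa [map_ofNat] using hunit)
  refine ⟨e, ?_, hbe⟩
  simp only [map_sub, aeval_X, map_pow] at he
  rw [IsIdempotentElem, ← sq]
  exact (sub_eq_zero.mp he).symm

theorem hasStronglyDrazinInverse_of_isNilpotent_sub_sq {b : S} (h : IsNilpotent (b - b ^ 2)) :
    HasStronglyDrazinInverse b := by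
  obtain ⟨e, he, hbe⟩ := exists_isIdempotentElem_isNilpotent_sub h
  obtain ⟨u, hu⟩ := hbe.isUnit_one_add
  have hbe_eq : b * e = u * e := by rw [hu]; linear_combination he.eq
  have hbz : b * (e * ↑u⁻¹) = e := by
    rw [← mul_assoc, hbe_eq, mul_comm, ← mul_assoc, Units.inv_mul, one_mul]
  refine ⟨e * ↑u⁻¹, mul_comm _ _, ?_, by rw [hbz]; exact hbe⟩
  rw [mul_assoc, hbz, mul_right_comm, he.eq]

theorem hasHiranoInverse_of_hasStronglyDrazinInverse_sq {a : S}
    (h : HasStronglyDrazinInverse (a ^ 2)) : HasHiranoInverse a := by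
  obtain ⟨w, -, hw, hnil⟩ := h
  refine ⟨a * w, mul_comm _ _, by linear_combination a * hw, ?_⟩
  rwa [← mul_assoc, ← sq]

end CommRing

theorem HasHiranoInverse.map {R S F : Type*} [Ring R] [Ring S] [FunLike F R S]
    [RingHomClass F R S] (f : F) {a : R} (h : HasHiranoInverse a) : HasHiranoInverse (f a) := by
  obtain ⟨z, hc, hz, hnil⟩ := h
  refine ⟨f z, by rw [← map_mul, hc, map_mul], by rw [← map_mul, ← map_mul, ← hz], ?_⟩
  simpa only [map_sub, map_pow, map_mul] using hnil.map f

theorem hasHiranoInverse_of_isNilpotent_sq_sub_pow_four {R : Type*} [Ring R] {a : R}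
    (h : IsNilpotent (a ^ 2 - a ^ 4)) : HasHiranoInverse a := by
  let a' : Algebra.adjoin ℤ {a} := ⟨a, Algebra.self_mem_adjoin_singleton ℤ a⟩
  have h' : IsNilpotent (a' ^ 2 - (a' ^ 2) ^ 2) := by
    obtain ⟨n, hn⟩ := h
    exact ⟨n, Subtype.ext (by simpa [← pow_mul] using hn)⟩
  exact (hasHiranoInverse_of_hasStronglyDrazinInverse_sq
    (hasStronglyDrazinInverse_of_isNilpotent_sub_sq h')).map (Algebra.adjoin ℤ {a}).val

section Matrix
variable {R : Type*} [Ring R]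

theorem pow_succ_matrix_upper (P Q : R) (k : ℕ) :
    (!![P, Q; 0, 0] : Matrix (Fin 2) (Fin 2) R) ^ (k + 1) = !![P ^ (k + 1), P ^ k * Q; 0, 0] := by
  induction k with
  | zero => simp
  | succ k ih => rw [pow_succ, ih, Matrix.mul_fin_two]; simp [pow_succ, mul_assoc]

theorem pow_succ_matrix_lower (P Q : R) (k : ℕ) :
    (!![0, 0; Q, P] : Matrix (Fin 2) (Fin 2) R) ^ (k + 1) = !![0, 0; P ^ k * Q, P ^ (k + 1)] := by
  induction k with
  | zero => simp
  | succ k ih => rw [pow_succ, ih, Matrix.mul_fin_two]; simp [pow_succ, mul_assoc]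

theorem isNilpotent_sub_sq_matrix_upper {P : R} (Q : R) (h : IsNilpotent (P - P ^ 2)) :
    IsNilpotent ((!![P, Q; 0, 0] : Matrix (Fin 2) (Fin 2) R) - !![P, Q; 0, 0] ^ 2) := by
  obtain ⟨k, hk⟩ := h
  refine ⟨k + 1, ?_⟩
  rw [sq, Matrix.mul_fin_two, show !![P, Q; 0, 0] - _ = !![P - P ^ 2, Q - P * Q; (0 : R), 0] by
    ext i j; fin_cases i <;> fin_cases j <;> simp [sq],
    pow_succ_matrix_upper, pow_succ (P - P ^ 2) k, hk]
  ext i j; fin_cases i <;> fin_cases j <;> simp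

theorem isNilpotent_sub_sq_matrix_lower {P : R} (Q : R) (h : IsNilpotent (P - P ^ 2)) :
    IsNilpotent ((!![0, 0; Q, P] : Matrix (Fin 2) (Fin 2) R) - !![0, 0; Q, P] ^ 2) := by
  obtain ⟨k, hk⟩ := h
  refine ⟨k + 1, ?_⟩
  rw [sq, Matrix.mul_fin_two, show !![0, 0; Q, P] - _ = !![(0 : R), 0; Q - P * Q, P - P ^ 2] by
    ext i j; fin_cases i <;> fin_cases j <;> simp [sq],
    pow_succ_matrix_lower, pow_succ (P - P ^ 2) k, hk]
  ext i j; fin_cases i <;> fin_cases j <;> simp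

theorem sq_matrix_fin_two (A B C D : R) :
    (!![A, B; C, D] : Matrix (Fin 2) (Fin 2) R) ^ 2 =
      !![A ^ 2 + B * C, A * B + B * D; 0, 0] + !![0, 0; C * A + D * C, C * B + D ^ 2] := by
  ext i j; fin_cases i <;> fin_cases j <;> simp [sq]

theorem isNilpotent_sq_sub_pow_four_matrix_fin_two {A B C D : R} (hA : IsNilpotent (A - A ^ 2))
    (hD : IsNilpotent (D - D ^ 2)) (hBC : B * C * (B * C) = 0) (h1 : A * (B * C) = 0)
    (h3 : B * D * C = 0) (h4 : B * D ^ 2 = 0) :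
    IsNilpotent ((!![A, B; C, D] : Matrix (Fin 2) (Fin 2) R) ^ 2 - !![A, B; C, D] ^ 4) := by
  have hP : IsNilpotent (A ^ 2 + B * C - (A ^ 2 + B * C) ^ 2) :=
    isNilpotent_add_sub_sq_of_mul_eq_zero (by rw [sq, mul_assoc, h1, mul_zero])
      (isNilpotent_sq_sub_sq_sq hA) (isNilpotent_sub_sq_of_isNilpotent ⟨2, by rw [sq, hBC]⟩)
  have hS : IsNilpotent (C * B + D ^ 2 - (C * B + D ^ 2) ^ 2) :=
    isNilpotent_add_sub_sq_of_mul_eq_zero (by rw [mul_assoc, h4, mul_zero])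
      (isNilpotent_sub_sq_of_isNilpotent ⟨3, by
        rw [show (C * B) ^ 3 = C * (B * C * (B * C)) * B by noncomm_ring, hBC]; simp⟩)
      (isNilpotent_sq_sub_sq_sq hD)
  have hQR : (A * B + B * D) * (C * A + D * C) = 0 := by
    rw [show (A * B + B * D) * (C * A + D * C) =
      A * (B * C) * A + A * (B * D * C) + B * D * C * A + B * D ^ 2 * C by noncomm_ring]
    simp [h1, h3, h4]
  have hQS : (A * B + B * D) * (C * B + D ^ 2) = 0 := by
    rw [show (A * B + B * D) * (C * B + D ^ 2) =
      A * (B * C) * B + A * (B * D ^ 2) + B * D * C * B + B * D ^ 2 * D by noncomm_ring]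
    simp [h1, h3, h4]
  rw [show 4 = 2 * 2 from rfl, pow_mul, sq_matrix_fin_two]
  refine isNilpotent_add_sub_sq_of_mul_eq_zero ?_ (isNilpotent_sub_sq_matrix_upper _ hP)
    (isNilpotent_sub_sq_matrix_lower _ hS)
  rw [Matrix.mul_fin_two, hQR, hQS]
  ext i j; fin_cases i <;> fin_cases j <;> simp

end Matrix

variable {X : Type*} [NormedAddCommGroup X] [NormedSpace ℂ X] [CompleteSpace X]

theorem hirano_full_matrix_general (A B C D AD : X →L[ℂ] X)
    (hAD : A * AD = AD * A ∧ AD = AD * A * AD ∧ IsNilpotent (A - A * AD))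
    (hD : HasStronglyDrazinInverse D)
    (h1 : A * (B * C) = 0)
    (h2 : (B * C) * (1 - A * AD) = 0)
    (h3 : B * D * C = 0)
    (h4 : B * D ^ 2 = 0) :
    HasHiranoInverse (!![A, B; C, D] : Matrix (Fin 2) (Fin 2) (X →L[ℂ] X)) := by
  have hBC_sq : B * C * (B * C) = 0 := by
    rw [mul_sub, mul_one, sub_eq_zero] at h2
    calc B * C * (B * C) = B * C * (A * AD) * (B * C) := by rw [← h2]
      _ = B * C * AD * (A * (B * C)) := by rw [hAD.1]; simp only [mul_assoc]
      _ = 0 := by rw [h1, mul_zero]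
  have hA : HasStronglyDrazinInverse A := ⟨AD, hAD⟩
  exact hasHiranoInverse_of_isNilpotent_sq_sub_pow_four <|
    isNilpotent_sq_sub_pow_four_matrix_fin_two hA.isNilpotent_sub_sq hD.isNilpotent_sub_sq
      hBC_sq h1 h3 h4

theorem hirano_full_matrix (A B C D AD : X →L[ℂ] X)
    (hAD : A * AD = AD * A ∧ AD = AD * A * AD ∧ IsNilpotent (A - A * AD))
    (hD : HasStronglyDrazinInverse D)
    (hBC : HasStronglyDrazinInverse (B * C))
    (h1 : A * (B * C) = 0)
    (h2 : (B * C) * (1 - A * AD) = 0)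
    (h3 : B * D * C = 0)
    (h4 : B * D ^ 2 = 0) :
    HasHiranoInverse (!![A, B; C, D] : Matrix (Fin 2) (Fin 2) (X →L[ℂ] X)) :=
  hirano_full_matrix_general A B C D AD hAD hD h1 h2 h3 h4
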